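/- Let p be a prime, R a commutative ring of characteristic p, σ a finite index type, and n : σ →₀ ℕ with 0 < |n| < p, where |n| = Σ i, n i. Then D_n(f^p) = 0 for every f ∈ MvPolynomial σ R. -/

import Mathlib

/-- The divided-power operator `D_n` on `MvPolynomial σ R`, determined on monomials by
`D_n (X ^ m) = (∏ i, Nat.choose (m i) (n i)) • X ^ (m - n)` (componentwise truncated
subtraction). -/
noncomputable def dpOp (R : Type*) [CommRing R] (σ : Type*) [Fintype σ] (n : σ →₀ ℕ) :
    MvPolynomial σ R →ₗ[R] MvPolynomial σ R :=
  (Finsupp.lsum ℕ fun m : σ →₀ ℕ =>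
    (∏ i, Nat.choose (m i) (n i)) • (MvPolynomial.monomial (m - n) : R →ₗ[R] MvPolynomial σ R))
    ∘ₗ (AddMonoidAlgebra.coeffLinearEquiv R).toLinearMap

/-! In characteristic `p` the map `f ↦ D_n (f ^ p)` is additive, since Frobenius
is, so it suffices to treat a monomial. Then `(b X^m)^p = b^p X^(p m)`, and for `i` with
`0 < n i < p` Lucas' theorem gives `(p * m i).choose (n i) ≡ (0).choose (n i) * _ = 0 [MOD p]`,
so the coefficient `∏ i, (p * m i).choose (n i)` vanishes in `R`. -/

theorem Nat.Prime.dvd_choose_mul {p k : ℕ} (hp : p.Prime) (hk : k ≠ 0) (hkp : k < p) (m : ℕ) :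
    p ∣ (p * m).choose k := by
  have := Fact.mk hp
  have lucas := Choose.choose_modEq_choose_mod_mul_choose_div_nat (n := p * m) (k := k) (p := p)
  rw [Nat.mul_mod_right, Nat.mod_eq_of_lt hkp, Nat.choose_eq_zero_of_lt (Nat.pos_of_ne_zero hk),
    zero_mul] at lucas
  exact Nat.modEq_zero_iff_dvd.mp lucas

open MvPolynomial

section

variable {R : Type*} [CommRing R] {σ : Type*} [Fintype σ]

lemma dpOp_monomial (n m : σ →₀ ℕ) (b : R) :
    dpOp R σ n (monomial m b) = (∏ i, (m i).choose (n i)) • monomial (m - n) b := by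
  simp [dpOp, AddMonoidAlgebra.coeffLinearEquiv]

lemma dpOp_monomial_eq_zero_of_dvd (p : ℕ) [CharP R p] {n m : σ →₀ ℕ}
    (h : p ∣ ∏ i, (m i).choose (n i)) (b : R) : dpOp R σ n (monomial m b) = 0 := by
  obtain ⟨c, hc⟩ := h
  rw [dpOp_monomial, hc, mul_smul, nsmul_eq_mul, CharP.cast_eq_zero, zero_mul]

lemma Nat.Prime.dvd_prod_choose_nsmul {p : ℕ} (hp : p.Prime) {n : σ →₀ ℕ} {i : σ} (hi : n i ≠ 0)
    (hip : n i < p) (m : σ →₀ ℕ) : p ∣ ∏ j, ((p • m) j).choose (n j) := by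
  have hdvd := hp.dvd_choose_mul hi hip (m i)
  rw [← smul_eq_mul, ← Finsupp.smul_apply] at hdvd
  exact hdvd.trans (Finset.dvd_prod_of_mem _ (Finset.mem_univ i))

end

/-- In characteristic `p`, the divided-power operator `D_n` with `0 < |n| < p` kills
`p`-th powers. -/
theorem dpOp_pow_p_eq_zero (p : ℕ) (hp : p.Prime) (R : Type*) [CommRing R] [CharP R p]
    (σ : Type*) [Fintype σ] (n : σ →₀ ℕ) (h0 : 0 < ∑ i, n i) (hlt : ∑ i, n i < p)
    (f : MvPolynomial σ R) :
    dpOp R σ n (f ^ p) = 0 := by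
  have := Fact.mk hp
  obtain ⟨i, -, hi⟩ := Finset.exists_ne_zero_of_sum_ne_zero h0.ne'
  have hip : n i < p :=
    (Finset.single_le_sum (fun j _ => Nat.zero_le (n j)) (Finset.mem_univ i)).trans_lt hlt
  induction f using MvPolynomial.induction_on' with
  | monomial m b =>
    rw [monomial_pow]
    exact dpOp_monomial_eq_zero_of_dvd p (hp.dvd_prod_choose_nsmul hi hip m) _
  | add f g hf hg => rw [add_pow_char, map_add, hf, hg, add_zero]
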